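/- arXiv:1801.00978 — 2 statements merged into one kernel-verified Lean document; each statement's English description precedes it below -/
import Mathlib

section
/- Let H be a real Hilbert space and I, K countable index sets. Let Θ = (θ_i)_{i∈I} and Ξ = (ξ_k)_{k∈K} be families in H such that the combined family Θ ∪ Ξ (indexed by the disjoint union I ⊔ K) is a Riesz basis for a closed subspace W of H. Let Φ̃ = (φ̃_i)_{i∈I} be a Riesz basis for a closed subspace Ṽ of H such that ⟨θ_i, φ̃_{i'}⟩_H = δ_{i i'} for all i, i' ∈ I. Define δ := the inf-sup constant of the pair (closed span of Θ, Ṽ), and ε := sup over nonzero v in the span of Θ and nonzero w in the span of Ξ of ⟨v,w⟩_H/(‖v‖_H ‖w‖_H). Assume δ > 0 and ε < 1. Then for each k ∈ K the series ψ_k := ξ_k − Σ_{i∈I} ⟨ξ_k, φ̃_i⟩_H θ_i converges in H, and the family Ψ := (ψ_k)_{k∈K} is a Riesz basis for W ∩ Ṽ^⊥. -/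
open scoped RealInnerProductSpace

/-- `φ` is a Riesz basis for the closed subspace `U` with Riesz constants `A ≤ B`. -/
def IsRieszBasisWith {H : Type*} [NormedAddCommGroup H] [InnerProductSpace ℝ H]
    {ι : Type*} (φ : ι → H) (U : Submodule ℝ H) (A B : ℝ) : Prop :=
  (Submodule.span ℝ (Set.range φ)).topologicalClosure = U ∧
    ∀ c : ι →₀ ℝ,
      A * ∑ i ∈ c.support, c i ^ 2 ≤ ‖∑ i ∈ c.support, c i • φ i‖ ^ 2 ∧
      ‖∑ i ∈ c.support, c i • φ i‖ ^ 2 ≤ B * ∑ i ∈ c.support, c i ^ 2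

/-- `φ` is a Riesz basis for the closed subspace `U`. -/
def IsRieszBasis {H : Type*} [NormedAddCommGroup H] [InnerProductSpace ℝ H]
    {ι : Type*} (φ : ι → H) (U : Submodule ℝ H) : Prop :=
  ∃ A B : ℝ, 0 < A ∧ A ≤ B ∧ IsRieszBasisWith φ U A B

/-- The inf-sup constant `inf_{0≠v∈V} sup_{0≠w∈W} ⟨v,w⟩_H/(‖v‖_H ‖w‖_H)` of a pair of
subspaces of a real Hilbert space. -/
noncomputable def infSupConst {H : Type*} [NormedAddCommGroup H] [InnerProductSpace ℝ H]
    (V W : Submodule ℝ H) : ℝ :=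
  ⨅ v : {v : V // v ≠ 0}, ⨆ w : {w : W // w ≠ 0},
    ⟪((v : V) : H), ((w : W) : H)⟫ / (‖((v : V) : H)‖ * ‖((w : W) : H)‖)

/-- `sup_{0≠v∈span S} sup_{0≠w∈span T} ⟨v,w⟩_H/(‖v‖_H ‖w‖_H)`. -/
noncomputable def spanAngle {H : Type*} [NormedAddCommGroup H] [InnerProductSpace ℝ H]
    (S T : Set H) : ℝ :=
  sSup {r : ℝ | ∃ v ∈ Submodule.span ℝ S, ∃ w ∈ Submodule.span ℝ T,
    v ≠ 0 ∧ w ≠ 0 ∧ r = ⟪v, w⟫ / (‖v‖ * ‖w‖)}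

/-! With `Q v = ∑ i, ⟪v, φt i⟫ • θ i` (bounded, since `θ` and `φt` satisfy upper Riesz bounds),
biorthogonality makes `T = 1 - Q` a projection onto `Vᗮ` that kills `θ`, and `ψ k = T (ξ k)`.
`T` carries `W = closure (span (θ ∪ ξ))` into `closure (span ψ)` and fixes `W ⊓ Vᗮ`, which gives
the closed span. The upper Riesz bound of `ψ` is that of `ξ` times `‖T‖²`. For the lower one,
`∑ c k • ψ k = u - Q u` with `u = ∑ c k • ξ k` and `Q u` a limit of combinations of `θ`, so the
lower Riesz bound of `θ ∪ ξ` applies. -/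

open Submodule Set

section RieszBounds

variable {H : Type*} [NormedAddCommGroup H] [InnerProductSpace ℝ H] {ι : Type*}

def HasLowerRieszBound (φ : ι → H) (A : ℝ) : Prop :=
  ∀ (c : ι → ℝ) (s : Finset ι), A * ∑ i ∈ s, c i ^ 2 ≤ ‖∑ i ∈ s, c i • φ i‖ ^ 2

def HasUpperRieszBound (φ : ι → H) (B : ℝ) : Prop :=
  ∀ (c : ι → ℝ) (s : Finset ι), ‖∑ i ∈ s, c i • φ i‖ ^ 2 ≤ B * ∑ i ∈ s, c i ^ 2

variable {φ : ι → H} {U : Submodule ℝ H} {A B : ℝ}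

lemma Finsupp.sum_support_indicator {R M : Type*} [Zero R] [AddCommMonoid M] (c : ι → R)
    (s : Finset ι) (g : ι → R → M) (hg : ∀ i, g i 0 = 0) :
    ∑ i ∈ (Finsupp.indicator s fun i _ => c i).support,
      g i (Finsupp.indicator s (fun i _ => c i) i) = ∑ i ∈ s, g i (c i) := by
  classical
  rw [← Finsupp.sum, Finsupp.sum_of_support_subset _ (Finsupp.support_indicator_subset _ _) _
    fun i _ => hg i]
  exact Finset.sum_congr rfl fun i hi => by rw [Finsupp.indicator_of_mem hi]

lemma IsRieszBasisWith.finset_bounds (h : IsRieszBasisWith φ U A B) (c : ι → ℝ)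
    (s : Finset ι) :
    A * ∑ i ∈ s, c i ^ 2 ≤ ‖∑ i ∈ s, c i • φ i‖ ^ 2 ∧
      ‖∑ i ∈ s, c i • φ i‖ ^ 2 ≤ B * ∑ i ∈ s, c i ^ 2 := by
  simpa only [Finsupp.sum_support_indicator c s (fun i x => x • φ i) fun _ => zero_smul ℝ _,
    Finsupp.sum_support_indicator c s (fun _ x => x ^ 2) fun _ => zero_pow two_ne_zero]
    using h.2 (Finsupp.indicator s fun i _ => c i)

lemma IsRieszBasisWith.hasLowerRieszBound (h : IsRieszBasisWith φ U A B) :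
    HasLowerRieszBound φ A := fun c s => (h.finset_bounds c s).1

lemma IsRieszBasisWith.hasUpperRieszBound (h : IsRieszBasisWith φ U A B) :
    HasUpperRieszBound φ B := fun c s => (h.finset_bounds c s).2

lemma isRieszBasisWith_of_bounds (hU : (span ℝ (range φ)).topologicalClosure = U)
    (hA : HasLowerRieszBound φ A) (hB : HasUpperRieszBound φ B) :
    IsRieszBasisWith φ U A B :=
  ⟨hU, fun c => ⟨hA c c.support, hB c c.support⟩⟩

lemma HasUpperRieszBound.mono (h : HasUpperRieszBound φ B) {B' : ℝ} (hBB' : B ≤ B') :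
    HasUpperRieszBound φ B' := fun c s =>
  (h c s).trans (mul_le_mul_of_nonneg_right hBB' (Finset.sum_nonneg fun _ _ => sq_nonneg _))

lemma HasUpperRieszBound.comp {ι' : Type*} (h : HasUpperRieszBound φ B) {e : ι' → ι}
    (he : Function.Injective e) : HasUpperRieszBound (φ ∘ e) B := fun c s => by
  simpa [Finset.sum_map, he.extend_apply] using h (Function.extend e c 0) (s.map ⟨e, he⟩)

lemma HasUpperRieszBound.clm_comp (h : HasUpperRieszBound φ B) (T : H →L[ℝ] H) :
    HasUpperRieszBound (T ∘ φ) (‖T‖ ^ 2 * B) := fun c s => by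
  have hsum : ∑ i ∈ s, c i • (T ∘ φ) i = T (∑ i ∈ s, c i • φ i) := by simp [map_sum]
  calc ‖∑ i ∈ s, c i • (T ∘ φ) i‖ ^ 2 ≤ (‖T‖ * ‖∑ i ∈ s, c i • φ i‖) ^ 2 := by
        rw [hsum]; gcongr; exact T.le_opNorm _
    _ ≤ ‖T‖ ^ 2 * B * ∑ i ∈ s, c i ^ 2 := by
        rw [mul_pow, mul_assoc]; gcongr; exact h c s

lemma HasUpperRieszBound.sum_inner_sq_le (h : HasUpperRieszBound φ B) (hB : 0 ≤ B) (v : H)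
    (s : Finset ι) :
    ∑ i ∈ s, ⟪v, φ i⟫ ^ 2 ≤ B * ‖v‖ ^ 2 := by
  set S := ∑ i ∈ s, ⟪v, φ i⟫ ^ 2
  have hS : S = ⟪v, ∑ i ∈ s, ⟪v, φ i⟫ • φ i⟫ := by
    simp only [S, inner_sum, real_inner_smul_right, sq]
  have hS0 : 0 ≤ S := Finset.sum_nonneg fun _ _ => sq_nonneg _
  have hCS : S ^ 2 ≤ ‖v‖ ^ 2 * (B * S) := calc
    S ^ 2 ≤ (‖v‖ * ‖∑ i ∈ s, ⟪v, φ i⟫ • φ i‖) ^ 2 := by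
      gcongr; rw [hS]; exact real_inner_le_norm _ _
    _ ≤ ‖v‖ ^ 2 * (B * S) := by rw [mul_pow]; gcongr; exact h _ s
  rcases hS0.eq_or_lt with hS_eq | hS_pos
  · rw [← hS_eq]; positivity
  · nlinarith

lemma HasUpperRieszBound.summable_smul [CompleteSpace H] (h : HasUpperRieszBound φ B) {c : ι → ℝ}
    (hc : Summable fun i => c i ^ 2) : Summable fun i => c i • φ i := by
  have hB : HasUpperRieszBound φ (max B 1) := h.mono (le_max_left _ _)
  have hB0 : 0 < max B 1 := lt_max_of_lt_right one_pos
  rw [summable_iff_vanishing_norm]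
  intro ε hε
  obtain ⟨s, hs⟩ := summable_iff_vanishing_norm.1 hc (ε ^ 2 / max B 1) (by positivity)
  refine ⟨s, fun t ht => ?_⟩
  have hsmall := hs t ht
  rw [Real.norm_of_nonneg (Finset.sum_nonneg fun _ _ => sq_nonneg _)] at hsmall
  refine (pow_lt_pow_iff_left₀ (norm_nonneg _) hε.le two_ne_zero).1 ?_
  calc ‖∑ i ∈ t, c i • φ i‖ ^ 2 ≤ max B 1 * ∑ i ∈ t, c i ^ 2 := hB c t
    _ < max B 1 * (ε ^ 2 / max B 1) := by gcongr
    _ = ε ^ 2 := by field_simp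

lemma HasUpperRieszBound.norm_sq_le_of_hasSum (h : HasUpperRieszBound φ B) (hB : 0 ≤ B)
    {c : ι → ℝ} {x : H} (hx : HasSum (fun i => c i • φ i) x) {C : ℝ}
    (hC : ∀ s : Finset ι, ∑ i ∈ s, c i ^ 2 ≤ C) : ‖x‖ ^ 2 ≤ B * C :=
  le_of_tendsto' ((continuous_norm.tendsto x).comp hx |>.pow 2) fun s =>
    (h c s).trans (mul_le_mul_of_nonneg_left (hC s) hB)

lemma HasUpperRieszBound.exists_hasSum_inner_smul [CompleteSpace H] {θ : ι → H} {B' : ℝ}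
    (hθ : HasUpperRieszBound θ B) (hB : 0 ≤ B) (hφ : HasUpperRieszBound φ B') (hB' : 0 ≤ B') :
    ∃ Q : H →L[ℝ] H, ∀ v, HasSum (fun i => ⟪v, φ i⟫ • θ i) (Q v) := by
  have hsum (v : H) : Summable fun i => ⟪v, φ i⟫ • θ i :=
    hθ.summable_smul (summable_of_sum_le (fun _ => sq_nonneg _) (hφ.sum_inner_sq_le hB' v))
  let Q : H →ₗ[ℝ] H :=
    { toFun := fun v => ∑' i, ⟪v, φ i⟫ • θ i
      map_add' := fun u v => by
        simpa only [inner_add_left, add_smul] using ((hsum u).hasSum.add (hsum v).hasSum).tsum_eq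
      map_smul' := fun r v => by
        simpa only [real_inner_smul_left, smul_smul, RingHom.id_apply]
          using ((hsum v).hasSum.const_smul r).tsum_eq }
  refine ⟨Q.mkContinuous √(B * B') fun v => ?_, fun v => (hsum v).hasSum⟩
  refine (pow_le_pow_iff_left₀ (norm_nonneg _) (by positivity) two_ne_zero).1 ?_
  rw [mul_pow, Real.sq_sqrt (by positivity), mul_assoc]
  exact hθ.norm_sq_le_of_hasSum hB (hsum v).hasSum (hφ.sum_inner_sq_le hB' v)

end RieszBounds

lemma HasSum.mem_topologicalClosure_span_range {M ι : Type*} [AddCommMonoid M]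
    [TopologicalSpace M] [Module ℝ M] [ContinuousAdd M] [ContinuousConstSMul ℝ M] {c : ι → ℝ}
    {θ : ι → M} {x : M}
    (hx : HasSum (fun i => c i • θ i) x) : x ∈ (span ℝ (range θ)).topologicalClosure :=
  (span ℝ (range θ)).isClosed_topologicalClosure.mem_of_tendsto hx <| .of_forall fun _ =>
    le_topologicalClosure _ <| sum_mem fun i _ => smul_mem _ _ <| subset_span ⟨i, rfl⟩

section Projection

variable {H : Type*} [NormedAddCommGroup H] [InnerProductSpace ℝ H]

lemma mem_orthogonal_topologicalClosure_span_range_iff {ι : Type*} {φ : ι → H} {x : H} :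
    x ∈ (span ℝ (range φ)).topologicalClosureᗮ ↔ ∀ i, ⟪φ i, x⟫ = 0 := by
  rw [orthogonal_closure, ← span_singleton_le_iff_mem]
  exact (isOrtho_span (s := {x}) (t := range φ)).trans (by simp [real_inner_comm])

variable {ι : Type*} [DecidableEq ι] {θ φ : ι → H} {Q : H → H}

lemma apply_eq_self_of_biorthogonal (hQ : ∀ v, HasSum (fun i => ⟪v, φ i⟫ • θ i) (Q v))
    (hθφ : ∀ i j, ⟪θ i, φ j⟫ = if i = j then (1 : ℝ) else 0) (j : ι) : Q (θ j) = θ j :=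
  (hQ (θ j)).unique <| by
    convert hasSum_ite_eq j (θ j) using 2 with i
    rw [hθφ]; split_ifs <;> simp_all [eq_comm]

lemma inner_apply_eq_of_biorthogonal (hQ : ∀ v, HasSum (fun i => ⟪v, φ i⟫ • θ i) (Q v))
    (hθφ : ∀ i j, ⟪θ i, φ j⟫ = if i = j then (1 : ℝ) else 0) (v : H) (j : ι) :
    ⟪φ j, Q v⟫ = ⟪φ j, v⟫ := by
  have hsum := (innerSL ℝ (φ j)).hasSum (hQ v)
  have hθφ' (i : ι) : ⟪φ j, θ i⟫ = if i = j then 1 else 0 := by rw [real_inner_comm, hθφ]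
  simp only [innerSL_apply_apply, real_inner_smul_right, hθφ'] at hsum
  rw [hsum.unique (hasSum_single j fun i hi => by simp [hi])]
  simp [real_inner_comm]

end Projection

section ComplementFamily

variable {H : Type*} [NormedAddCommGroup H] [InnerProductSpace ℝ H] {I K : Type*}
  {θ : I → H} {ξ : K → H} {W U : Submodule ℝ H} {A B : ℝ}

lemma HasLowerRieszBound.le_norm_sum_sub_sq (h : HasLowerRieszBound (Sum.elim θ ξ) A)
    (hA : 0 ≤ A) (c : K → ℝ) (t : Finset K) {x : H}
    (hx : x ∈ (span ℝ (range θ)).topologicalClosure) :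
    A * ∑ k ∈ t, c k ^ 2 ≤ ‖∑ k ∈ t, c k • ξ k - x‖ ^ 2 := by
  have hclosed : IsClosed {x : H | A * ∑ k ∈ t, c k ^ 2 ≤ ‖∑ k ∈ t, c k • ξ k - x‖ ^ 2} :=
    isClosed_le continuous_const (by fun_prop)
  rw [← SetLike.mem_coe, topologicalClosure_coe] at hx
  refine closure_minimal (fun x hx => ?_) hclosed hx
  obtain ⟨d, rfl⟩ := Finsupp.mem_span_range_iff_exists_finsupp.1 hx
  have hd := h (Sum.elim (-d) c) (d.support.disjSum t)
  simp only [Finset.sum_disjSum, Sum.elim_inl, Sum.elim_inr, Pi.neg_apply, neg_sq,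
    neg_smul, Finset.sum_neg_distrib] at hd
  have hd0 : 0 ≤ ∑ i ∈ d.support, d i ^ 2 := Finset.sum_nonneg fun _ _ => sq_nonneg _
  calc A * ∑ k ∈ t, c k ^ 2 ≤ A * (∑ i ∈ d.support, d i ^ 2 + ∑ k ∈ t, c k ^ 2) := by
        gcongr; linarith
    _ ≤ _ := hd
    _ = _ := by rw [Finsupp.sum, neg_add_eq_sub]

lemma topologicalClosure_span_range_comp_eq_inf (T : H →L[ℝ] H)
    (hW : (span ℝ (range (Sum.elim θ ξ))).topologicalClosure = W) (hTθ : ∀ i, T (θ i) = 0)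
    (hTW : ∀ v ∈ W, T v ∈ W) (hTU : ∀ v, T v ∈ U) (hU : IsClosed (U : Set H))
    (hTid : ∀ v ∈ U, T v = v) :
    (span ℝ (range (T ∘ ξ))).topologicalClosure = W ⊓ U := by
  apply le_antisymm
  · refine topologicalClosure_minimal _ (span_le.2 ?_)
      ((hW ▸ isClosed_topologicalClosure _).inter hU)
    rintro _ ⟨k, rfl⟩
    exact ⟨hTW _ (hW ▸ le_topologicalClosure _ (subset_span ⟨Sum.inr k, rfl⟩)), hTU _⟩
  · have hWT : W ≤ (span ℝ (range (T ∘ ξ))).topologicalClosure.comap (T : H →ₗ[ℝ] H) := by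
      rw [← hW]
      refine topologicalClosure_minimal _ (span_le.2 ?_)
        ((isClosed_topologicalClosure _).preimage T.continuous)
      rintro _ ⟨i | k, rfl⟩
      · simp only [SetLike.mem_coe, mem_comap, Sum.elim_inl, ContinuousLinearMap.coe_coe, hTθ]
        exact zero_mem _
      · exact le_topologicalClosure _ (subset_span ⟨k, rfl⟩)
    rintro v ⟨hvW, hvU⟩
    simpa [hTid v hvU] using hWT hvW

theorem IsRieszBasisWith.comp_projection (h : IsRieszBasisWith (Sum.elim θ ξ) W A B)
    (hA : 0 ≤ A) (T : H →L[ℝ] H) (hTθ : ∀ i, T (θ i) = 0)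
    (hT : ∀ v, v - T v ∈ (span ℝ (range θ)).topologicalClosure) (hTU : ∀ v, T v ∈ U)
    (hU : IsClosed (U : Set H)) (hTid : ∀ v ∈ U, T v = v) :
    IsRieszBasisWith (T ∘ ξ) (W ⊓ U) A (max (‖T‖ ^ 2 * B) A) := by
  have hθW : (span ℝ (range θ)).topologicalClosure ≤ W := h.1 ▸ topologicalClosure_mono
    (span_mono (Sum.elim_comp_inl θ ξ ▸ range_comp_subset_range _ _))
  have hTW (v : H) (hv : v ∈ W) : T v ∈ W := by
    simpa using W.sub_mem hv (hθW (hT v))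
  refine isRieszBasisWith_of_bounds
    (topologicalClosure_span_range_comp_eq_inf T h.1 hTθ hTW hTU hU hTid) (fun c t => ?_)
    (((h.hasUpperRieszBound.comp Sum.inr_injective).clm_comp T).mono (le_max_left _ _))
  have hTsum : ∑ k ∈ t, c k • (T ∘ ξ) k =
      ∑ k ∈ t, c k • ξ k - (∑ k ∈ t, c k • ξ k - T (∑ k ∈ t, c k • ξ k)) := by
    simp [map_sum]
  rw [hTsum]
  exact h.hasLowerRieszBound.le_norm_sum_sub_sq hA c t (hT _)

end ComplementFamily

theorem stmt6_general {H : Type*} [NormedAddCommGroup H] [InnerProductSpace ℝ H] [CompleteSpace H]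
    {I K : Type*} [DecidableEq I]
    (θ : I → H) (ξ : K → H) (W V : Submodule ℝ H)
    (hΘΞ : IsRieszBasis (Sum.elim θ ξ) W)
    (φt : I → H) (hφt : IsRieszBasis φt V)
    (hbiorth : ∀ i i' : I, ⟪θ i, φt i'⟫ = if i = i' then (1 : ℝ) else 0) :
    ∃ ψ : K → H,
      (∀ k : K, HasSum (fun i : I => ⟪ξ k, φt i⟫ • θ i) (ξ k - ψ k)) ∧
      IsRieszBasis ψ (W ⊓ Vᗮ) := by
  obtain ⟨A, B, hA, hAB, hΘΞ⟩ := hΘΞ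
  obtain ⟨A', B', hA', hAB', hφt⟩ := hφt
  have hθ : HasUpperRieszBound θ B := hΘΞ.hasUpperRieszBound.comp Sum.inl_injective
  obtain ⟨Q, hQ⟩ :=
    hθ.exists_hasSum_inner_smul (hA.le.trans hAB) hφt.hasUpperRieszBound (hA'.le.trans hAB')
  refine ⟨(ContinuousLinearMap.id ℝ H - Q) ∘ ξ, fun k => by simpa using hQ (ξ k),
    A, _, hA, le_max_right _ _, hΘΞ.comp_projection hA.le _ (fun i => ?_) (fun v => ?_)
      (fun v => ?_) (isClosed_orthogonal V) (fun v hv => ?_)⟩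
  · simp [apply_eq_self_of_biorthogonal hQ hbiorth]
  · simpa using (hQ v).mem_topologicalClosure_span_range
  · rw [← hφt.1, mem_orthogonal_topologicalClosure_span_range_iff]
    simp [inner_sub_right, inner_apply_eq_of_biorthogonal hQ hbiorth]
  · rw [← hφt.1, mem_orthogonal_topologicalClosure_span_range_iff] at hv
    have hQv := hQ v
    simp only [real_inner_comm _ v, hv, zero_smul] at hQv
    simp [hQv.unique hasSum_zero]

theorem stmt6 {H : Type*} [NormedAddCommGroup H] [InnerProductSpace ℝ H] [CompleteSpace H]
    {I K : Type*} [Countable I] [Countable K] [DecidableEq I]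
    (θ : I → H) (ξ : K → H) (W V : Submodule ℝ H)
    (hWc : IsClosed (W : Set H)) (hVc : IsClosed (V : Set H))
    (hΘΞ : IsRieszBasis (Sum.elim θ ξ) W)
    (φt : I → H) (hφt : IsRieszBasis φt V)
    (hbiorth : ∀ i i' : I, ⟪θ i, φt i'⟫ = if i = i' then (1 : ℝ) else 0)
    (hδ : 0 < infSupConst (Submodule.span ℝ (Set.range θ)).topologicalClosure V)
    (hε : spanAngle (Set.range θ) (Set.range ξ) < 1) :
    ∃ ψ : K → H,
      (∀ k : K, HasSum (fun i : I => ⟪ξ k, φt i⟫ • θ i) (ξ k - ψ k)) ∧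
      IsRieszBasis ψ (W ⊓ Vᗮ) :=
  stmt6_general θ ξ W V hΘΞ φt hφt hbiorth
end

section
/- Let H be a real Hilbert space and P : H → H a nonzero bounded linear projector (P∘P = P). Then range P and range P* are closed subspaces of H, and the inf-sup constant of the pair (range P*, range P) equals ‖P‖^{-1}; the inf-sup constant of the pair (range P, range P*) also equals ‖P‖^{-1}. -/
open scoped RealInnerProductSpace

/-!
For `v ∈ range P†` we have `P† v = v`, hence `⟪v, P x⟫ = ⟪v, x⟫`; testing against `w = P v` gives
the ratio `‖v‖ / ‖P v‖ ≥ ‖P‖⁻¹`. Conversely, for `v = P† u` and `w ∈ range P` we have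
`⟪P† u, w⟫ = ⟪u, w⟫ ≤ ‖u‖ ‖w‖`, so the inf-sup constant is at most `‖u‖ / ‖P† u‖`, and taking the
infimum over `u` gives `‖P†‖⁻¹ = ‖P‖⁻¹`. The second pair follows by applying this to `P†`.
-/

open ContinuousLinearMap

section InfSupConst

variable {H : Type*} [NormedAddCommGroup H] [InnerProductSpace ℝ H] {V W : Submodule ℝ H}

lemma bddAbove_range_inner_div_norm_mul_norm (v : H) :
    BddAbove (Set.range fun w : {w : W // w ≠ 0} => ⟪v, ((w : W) : H)⟫ / (‖v‖ * ‖((w : W) : H)‖)) :=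
  ⟨1, by rintro _ ⟨w, rfl⟩; exact (abs_le.mp (abs_real_inner_div_norm_mul_norm_le_one _ _)).2⟩

lemma le_infSupConst {c : ℝ} (hV : V ≠ ⊥)
    (h : ∀ v ∈ V, v ≠ 0 → ∃ w ∈ W, w ≠ 0 ∧ c ≤ ⟪v, w⟫ / (‖v‖ * ‖w‖)) :
    c ≤ infSupConst V W := by
  obtain ⟨v, hv, hv0⟩ := (Submodule.ne_bot_iff V).1 hV
  have : Nonempty {v : V // v ≠ 0} := ⟨⟨⟨v, hv⟩, by simpa using hv0⟩⟩
  refine le_ciInf fun ⟨⟨v, hv⟩, hv0⟩ => ?_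
  obtain ⟨w, hw, hw0, hc⟩ := h v hv (by simpa using hv0)
  exact le_ciSup_of_le (bddAbove_range_inner_div_norm_mul_norm v) ⟨⟨w, hw⟩, by simpa using hw0⟩ hc

lemma infSupConst_le {c : ℝ} {v : H} (hv : v ∈ V) (hv0 : v ≠ 0) (hW : W ≠ ⊥)
    (h : ∀ w ∈ W, w ≠ 0 → ⟪v, w⟫ / (‖v‖ * ‖w‖) ≤ c) :
    infSupConst V W ≤ c := by
  obtain ⟨w₀, hw₀, hw₀0⟩ := (Submodule.ne_bot_iff W).1 hW
  have : Nonempty {w : W // w ≠ 0} := ⟨⟨⟨w₀, hw₀⟩, by simpa using hw₀0⟩⟩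
  have hbdd : BddBelow (Set.range fun v : {v : V // v ≠ 0} => ⨆ w : {w : W // w ≠ 0},
      ⟪((v : V) : H), ((w : W) : H)⟫ / (‖((v : V) : H)‖ * ‖((w : W) : H)‖)) := by
    refine ⟨-1, ?_⟩
    rintro _ ⟨v, rfl⟩
    exact le_ciSup_of_le (bddAbove_range_inner_div_norm_mul_norm _) ⟨⟨w₀, hw₀⟩, by simpa using hw₀0⟩
      (abs_le.mp (abs_real_inner_div_norm_mul_norm_le_one _ _)).1
  refine ciInf_le_of_le hbdd ⟨⟨v, hv⟩, by simpa using hv0⟩ (ciSup_le fun ⟨⟨w, hw⟩, hw0⟩ => ?_)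
  exact h w hw (by simpa using hw0)

end InfSupConst

section Projection

variable {H : Type*} [NormedAddCommGroup H] [InnerProductSpace ℝ H] [CompleteSpace H]
  {P : H →L[ℝ] H}

lemma IsIdempotentElem.adjoint (hP : IsIdempotentElem P) : IsIdempotentElem (adjoint P) :=
  star_eq_adjoint P ▸ hP.star

lemma inner_apply_of_mem_range_adjoint (hP : IsIdempotentElem P) {v : H}
    (hv : v ∈ LinearMap.range (adjoint P : H →ₗ[ℝ] H)) (x : H) : ⟪v, P x⟫ = ⟪v, x⟫ := by
  have hPv : adjoint P v = v :=
    (LinearMap.IsIdempotentElem.mem_range_iff hP.adjoint.toLinearMap).1 hv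
  rw [← adjoint_inner_left, hPv]

lemma inner_adjoint_apply_of_mem_range (hP : IsIdempotentElem P) {w : H}
    (hw : w ∈ LinearMap.range (P : H →ₗ[ℝ] H)) (u : H) : ⟪adjoint P u, w⟫ = ⟪u, w⟫ := by
  have hPw : P w = w := (LinearMap.IsIdempotentElem.mem_range_iff hP.toLinearMap).1 hw
  rw [adjoint_inner_left, hPw]

lemma inv_norm_le_infSupConst_range_adjoint (hP : IsIdempotentElem P) (hP0 : P ≠ 0) :
    ‖P‖⁻¹ ≤
      infSupConst (LinearMap.range (adjoint P : H →ₗ[ℝ] H)) (LinearMap.range (P : H →ₗ[ℝ] H)) := by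
  have hPa0 : adjoint P ≠ 0 := by simpa using hP0
  refine le_infSupConst (LinearMap.range_eq_bot.not.2 (coe_injective.ne hPa0)) fun v hv hv0 => ?_
  have hvPv : ⟪v, P v⟫ = ‖v‖ ^ 2 := by
    rw [inner_apply_of_mem_range_adjoint hP hv, real_inner_self_eq_norm_sq]
  have hv_pos : 0 < ‖v‖ := norm_pos_iff.2 hv0
  have hPv_pos : 0 < ‖P v‖ := by
    refine norm_pos_iff.2 fun h => ?_
    rw [h, inner_zero_right] at hvPv
    exact (pow_pos hv_pos 2).ne hvPv
  have hPv_le : ‖P‖⁻¹ * ‖P v‖ ≤ ‖v‖ := by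
    rw [inv_mul_le_iff₀ (norm_pos_iff.2 hP0)]
    exact P.le_opNorm v
  refine ⟨P v, ⟨v, rfl⟩, norm_pos_iff.1 hPv_pos, ?_⟩
  rw [hvPv, le_div_iff₀ (by positivity)]
  calc ‖P‖⁻¹ * (‖v‖ * ‖P v‖) = ‖v‖ * (‖P‖⁻¹ * ‖P v‖) := by ring
    _ ≤ ‖v‖ * ‖v‖ := by gcongr
    _ = ‖v‖ ^ 2 := (sq _).symm

lemma infSupConst_range_adjoint_le (hP : IsIdempotentElem P) {u : H} (hu : adjoint P u ≠ 0) :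
    infSupConst (LinearMap.range (adjoint P : H →ₗ[ℝ] H)) (LinearMap.range (P : H →ₗ[ℝ] H)) ≤
      ‖u‖ / ‖adjoint P u‖ := by
  have hP0 : P ≠ 0 := by rintro rfl; simp at hu
  refine infSupConst_le ⟨u, rfl⟩ hu (LinearMap.range_eq_bot.not.2 (coe_injective.ne hP0))
    fun w hw hw0 => ?_
  have hw_pos : 0 < ‖w‖ := norm_pos_iff.2 hw0
  calc ⟪adjoint P u, w⟫ / (‖adjoint P u‖ * ‖w‖) = ⟪u, w⟫ / (‖adjoint P u‖ * ‖w‖) := by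
        rw [inner_adjoint_apply_of_mem_range hP hw]
    _ ≤ ‖u‖ * ‖w‖ / (‖adjoint P u‖ * ‖w‖) := by gcongr; exact real_inner_le_norm u w
    _ = ‖u‖ / ‖adjoint P u‖ := mul_div_mul_right _ _ hw_pos.ne'

theorem infSupConst_range_adjoint_range (hP : IsIdempotentElem P) (hP0 : P ≠ 0) :
    infSupConst (LinearMap.range (adjoint P : H →ₗ[ℝ] H)) (LinearMap.range (P : H →ₗ[ℝ] H)) =
      ‖P‖⁻¹ := by
  set c := infSupConst (LinearMap.range (adjoint P : H →ₗ[ℝ] H)) (LinearMap.range (P : H →ₗ[ℝ] H))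
  have hlow : ‖P‖⁻¹ ≤ c := inv_norm_le_infSupConst_range_adjoint hP hP0
  have hP_pos : 0 < ‖P‖ := norm_pos_iff.2 hP0
  have hc : 0 < c := (inv_pos.2 hP_pos).trans_le hlow
  have hPa : ‖adjoint P‖ ≤ c⁻¹ := opNorm_le_bound _ (inv_nonneg.2 hc.le) fun u => by
    rcases eq_or_ne (adjoint P u) 0 with hu | hu
    · rw [hu, norm_zero]
      positivity
    · have := infSupConst_range_adjoint_le hP hu
      rw [le_div_iff₀ (norm_pos_iff.2 hu)] at this
      rw [inv_mul_eq_div, le_div_iff₀ hc]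
      linarith
  rw [LinearIsometryEquiv.norm_map] at hPa
  exact le_antisymm ((le_inv_comm₀ hP_pos hc).1 hPa) hlow

end Projection

theorem stmt8 {H : Type*} [NormedAddCommGroup H] [InnerProductSpace ℝ H] [CompleteSpace H]
    (P : H →L[ℝ] H) (hP : P.comp P = P) (hP0 : P ≠ 0) :
    IsClosed ((LinearMap.range (P : H →ₗ[ℝ] H) : Submodule ℝ H) : Set H) ∧
    IsClosed ((LinearMap.range (ContinuousLinearMap.adjoint P : H →ₗ[ℝ] H) : Submodule ℝ H) : Set H) ∧
    infSupConst (LinearMap.range (ContinuousLinearMap.adjoint P : H →ₗ[ℝ] H)) (LinearMap.range (P : H →ₗ[ℝ] H))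
      = ‖P‖⁻¹ ∧
    infSupConst (LinearMap.range (P : H →ₗ[ℝ] H)) (LinearMap.range (ContinuousLinearMap.adjoint P : H →ₗ[ℝ] H))
      = ‖P‖⁻¹ := by
  have hP : IsIdempotentElem P := hP
  refine ⟨hP.isClosed_range, hP.adjoint.isClosed_range,
    infSupConst_range_adjoint_range hP hP0, ?_⟩
  simpa using infSupConst_range_adjoint_range hP.adjoint (by simpa using hP0)
end
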